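/- arXiv:1703.09280 — 2 statements merged into one kernel-verified Lean document; each statement's English description precedes it below -/
import Mathlib

section
/- Suppose f* is finite and attained on the nonempty set X* = { x | f(x) = f* }. Run the Radial Subgradient Method with step sizes α_i = ((z_i − f*)/(0 − f*))·(1/‖ζ_i‖²), assuming ζ_i ≠ 0 at each iteration. Then for any ε > 0, some iteration i ≤ ⌈(dist(0, X*)²/R²)·(1/ε²)⌉ satisfies (f(x_i) − f*)/(0 − f*) ≤ ε. -/
open Filter

/-- The perspective function `f^p(x, γ) = γ · f(x/γ)` of `f`, for `γ > 0`. -/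
noncomputable def perspective {n : ℕ} (f : EuclideanSpace ℝ (Fin n) → EReal)
    (x : EuclideanSpace ℝ (Fin n)) (γ : ℝ) : EReal :=
  (γ : EReal) * f (γ⁻¹ • x)

/-- The radial reformulation of `f` of level `z`:
`γ_z(x) = inf { γ > 0 | f^p(x, γ) ≤ z }`. -/
noncomputable def radial {n : ℕ} (f : EuclideanSpace ℝ (Fin n) → EReal)
    (z : ℝ) (x : EuclideanSpace ℝ (Fin n)) : ℝ :=
  sInf {γ : ℝ | 0 < γ ∧ perspective f x γ ≤ (z : EReal)}

/-- `f : ℝⁿ → ℝ ∪ {∞}` is lower-semicontinuous and convex, never `-∞`, with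
`0` in the interior of its effective domain and `f(0) < 0`. -/
structure GoodFun {n : ℕ} (f : EuclideanSpace ℝ (Fin n) → EReal) : Prop where
  proper : ∀ x, f x ≠ ⊥
  lsc : LowerSemicontinuous f
  convexEpi : Convex ℝ {p : EuclideanSpace ℝ (Fin n) × ℝ | f p.1 ≤ (p.2 : EReal)}
  zero_mem : (0 : EuclideanSpace ℝ (Fin n)) ∈ interior {x | f x ≠ ⊤}
  neg_at_zero : f 0 < 0

/-- `ζ` is a subgradient of `g` at `x`. -/
def IsSubgradient {n : ℕ} (g : EuclideanSpace ℝ (Fin n) → ℝ)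
    (x ζ : EuclideanSpace ℝ (Fin n)) : Prop :=
  ∀ y, g x + (inner ℝ ζ (y - x) : ℝ) ≤ g y

/-- The Radial Subgradient Method with positive step sizes `α`:
`x 0 = 0`, `z 0 = f 0`; at iteration `i`, `ζ i` is a subgradient of `γ_{z i}` at `x i`,
`xt (i+1) = x i - α i • ζ i`, and whenever `γ_{z i}(xt (i+1)) > 0`,
`(x (i+1), z (i+1)) = (xt (i+1), z i) / γ_{z i}(xt (i+1))`. -/
structure RSM {n : ℕ} (f : EuclideanSpace ℝ (Fin n) → EReal) (α : ℕ → ℝ)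
    (x xt : ℕ → EuclideanSpace ℝ (Fin n)) (z : ℕ → ℝ)
    (ζ : ℕ → EuclideanSpace ℝ (Fin n)) : Prop where
  step_pos : ∀ i, 0 < α i
  init_x : x 0 = 0
  init_z : f 0 = ((z 0 : ℝ) : EReal)
  subgrad : ∀ i, IsSubgradient (radial f (z i)) (x i) (ζ i)
  tilde : ∀ i, xt (i + 1) = x i - α i • ζ i
  update_x : ∀ i, 0 < radial f (z i) (xt (i + 1)) →
    x (i + 1) = (radial f (z i) (xt (i + 1)))⁻¹ • xt (i + 1)
  update_z : ∀ i, 0 < radial f (z i) (xt (i + 1)) →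
    z (i + 1) = z i / radial f (z i) (xt (i + 1))

/-!
Along the iteration `γ_{z i}(x i) = 1`: the update divides by `γ_{z i}(x̃)`, which is positive
because `f ≥ f*`. By lower semicontinuity `f (x i) ≤ z i`, so the relative gap at `x i` is at most
`Δ i = (z i - f*) / (0 - f*)`. For `x* ∈ X*`, `γ_{z i}` is at most `z i / f* = 1 - Δ i` at
`(z i / f*) x*`, so the subgradient inequality turns the step into a Polyak step towards that
point; as the update is a rescaling, `‖x i / z i - x* / f*‖²` drops by `(Δ i / (‖ζ i‖ z i))²`.
Since `γ_z` is `1/R`-Lipschitz, `‖ζ i‖ ≤ 1 / R`, so while the gap exceeds `ε` each drop is at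
least `(ε R / f*)²`; starting from `‖x*‖² / f*²`, this lasts at most `‖x*‖² / (ε R)²` steps.
-/

open Topology Pointwise

section ConvexEpigraph

variable {E : Type*} {f : E → EReal}

theorem apply_smul_add_smul_le_of_convex_epigraph [AddCommGroup E] [Module ℝ E]
    (hf : Convex ℝ {p : E × ℝ | f p.1 ≤ p.2}) {x y : E} {r s a b : ℝ}
    (ha : 0 ≤ a) (hb : 0 ≤ b) (hab : a + b = 1) (hx : f x ≤ r) (hy : f y ≤ s) :
    f (a • x + b • y) ≤ ↑(a * r + b * s) := by
  simpa using hf (x := (x, r)) (y := (y, s)) hx hy ha hb hab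

theorem convexOn_toReal_of_convex_epigraph [AddCommGroup E] [Module ℝ E]
    (hf : Convex ℝ {p : E × ℝ | f p.1 ≤ p.2}) (hbot : ∀ x, f x ≠ ⊥) :
    ConvexOn ℝ {x | f x ≠ ⊤} fun x ↦ (f x).toReal := by
  have hcombo : ∀ ⦃x⦄, f x ≠ ⊤ → ∀ ⦃y⦄, f y ≠ ⊤ → ∀ ⦃a b : ℝ⦄, 0 ≤ a → 0 ≤ b → a + b = 1 →
      f (a • x + b • y) ≤ ↑(a * (f x).toReal + b * (f y).toReal) :=
    fun x hx y hy a b ha hb hab ↦ apply_smul_add_smul_le_of_convex_epigraph hf ha hb hab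
      (EReal.coe_toReal hx (hbot x)).ge (EReal.coe_toReal hy (hbot y)).ge
  refine ⟨fun x hx y hy a b ha hb hab ↦ ?_, fun x hx y hy a b ha hb hab ↦ ?_⟩
  · exact ne_top_of_le_ne_top (EReal.coe_ne_top _) (hcombo hx hy ha hb hab)
  · exact EReal.toReal_le_toReal (hcombo hx hy ha hb hab) (hbot _) (EReal.coe_ne_top _)

theorem eventually_lt_of_convex_epigraph [NormedAddCommGroup E] [NormedSpace ℝ E]
    [FiniteDimensional ℝ E] (hf : Convex ℝ {p : E × ℝ | f p.1 ≤ p.2}) (hbot : ∀ x, f x ≠ ⊥)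
    {x₀ : E} (hx₀ : x₀ ∈ interior {x | f x ≠ ⊤}) {c : ℝ} (hc : f x₀ < c) :
    ∀ᶠ y in 𝓝 x₀, f y < c := by
  have hcont : ContinuousAt (fun x ↦ (f x).toReal) x₀ :=
    ((convexOn_toReal_of_convex_epigraph hf hbot).continuousOn_interior x₀ hx₀).continuousAt
      (isOpen_interior.mem_nhds hx₀)
  have hlt : (f x₀).toReal < c := by
    rw [← EReal.coe_toReal (interior_subset hx₀) (hbot x₀)] at hc
    exact_mod_cast hc
  filter_upwards [hcont.eventually (gt_mem_nhds hlt), mem_interior_iff_mem_nhds.1 hx₀]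
    with y hy hdom
  rw [← EReal.coe_toReal hdom (hbot y)]
  exact_mod_cast hy

end ConvexEpigraph

theorem add_one_mul_le_of_forall_le_sub {a : ℕ → ℝ} {c : ℝ} {N : ℕ} (hpos : 0 ≤ a (N + 1))
    (h : ∀ i ≤ N, a (i + 1) ≤ a i - c) : (N + 1) * c ≤ a 0 := by
  have key : ∀ k ≤ N + 1, a k + k * c ≤ a 0 := by
    intro k hk
    induction k with
    | zero => simp
    | succ k ih =>
      have := h k (by omega)
      push_cast
      linarith [ih (by omega)]
  have := key (N + 1) le_rfl
  push_cast at this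
  linarith

/-- One step of the subgradient method with Polyak's step size `Δ / ‖ζ‖²`. -/
theorem norm_sub_smul_sub_sq_le {F : Type*} [NormedAddCommGroup F] [InnerProductSpace ℝ F]
    {x y ζ : F} {Δ : ℝ} (hζ : ζ ≠ 0) (hΔ : 0 ≤ Δ) (hinner : Δ ≤ inner ℝ ζ (x - y)) :
    ‖x - (Δ / ‖ζ‖ ^ 2) • ζ - y‖ ^ 2 ≤ ‖x - y‖ ^ 2 - Δ ^ 2 / ‖ζ‖ ^ 2 := by
  have hexpand : ‖x - (Δ / ‖ζ‖ ^ 2) • ζ - y‖ ^ 2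
      = ‖x - y‖ ^ 2 - 2 * (Δ / ‖ζ‖ ^ 2) * inner ℝ ζ (x - y) + Δ ^ 2 / ‖ζ‖ ^ 2 := by
    rw [sub_right_comm, norm_sub_sq_real, real_inner_smul_right, real_inner_comm, norm_smul,
      Real.norm_eq_abs, mul_pow, sq_abs]
    field_simp
  have : 2 * (Δ / ‖ζ‖ ^ 2) * Δ ≤ 2 * (Δ / ‖ζ‖ ^ 2) * inner ℝ ζ (x - y) :=
    mul_le_mul_of_nonneg_left hinner (by positivity)
  have : 2 * (Δ / ‖ζ‖ ^ 2) * Δ = 2 * (Δ ^ 2 / ‖ζ‖ ^ 2) := by ring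
  linarith

theorem le_infDist_sq {X : Type*} [PseudoMetricSpace X] {s : Set X} {x : X} {a : ℝ}
    (hs : s.Nonempty) (h : ∀ y ∈ s, a ≤ dist x y ^ 2) : a ≤ Metric.infDist x s ^ 2 :=
  (Real.sqrt_le_left Metric.infDist_nonneg).1 <| (Metric.le_infDist hs).2 fun y hy ↦
    (Real.sqrt_le_left dist_nonneg).2 (h y hy)

section Radial

variable {n : ℕ} {f : EuclideanSpace ℝ (Fin n) → EReal} {z : ℝ} {x : EuclideanSpace ℝ (Fin n)}

theorem GoodFun.exists_real_apply_zero (hf : GoodFun f) : ∃ w : ℝ, f 0 = w ∧ w < 0 := by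
  have hw := EReal.coe_toReal hf.neg_at_zero.ne_top (hf.proper 0)
  exact ⟨(f 0).toReal, hw.symm, by exact_mod_cast hw ▸ hf.neg_at_zero⟩

theorem GoodFun.exists_nonpos_of_norm_le (hf : GoodFun f) :
    ∃ ρ > 0, ∀ y : EuclideanSpace ℝ (Fin n), ‖y‖ ≤ ρ → f y ≤ 0 := by
  obtain ⟨ε, hε, hball⟩ := Metric.eventually_nhds_iff.1 <|
    eventually_lt_of_convex_epigraph hf.convexEpi hf.proper hf.zero_mem
      (c := 0) (by exact_mod_cast hf.neg_at_zero)
  refine ⟨ε / 2, half_pos hε, fun y hy ↦ ?_⟩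
  have := hball (y := y) (by rw [dist_zero_right]; linarith)
  exact_mod_cast this.le

theorem GoodFun.pos_of_isLUB (hf : GoodFun f) {R : ℝ}
    (hR : IsLUB {r : ℝ | ∀ x, ‖x‖ ≤ r → f x ≤ 0} R) : 0 < R := by
  obtain ⟨ρ, hρ, hball⟩ := hf.exists_nonpos_of_norm_le
  exact hρ.trans_le (hR.1 hball)

theorem GoodFun.neg_of_forall_le (hf : GoodFun f) {m : ℝ} (hm : ∀ y, (m : EReal) ≤ f y) :
    m < 0 := by
  exact_mod_cast (hm 0).trans_lt hf.neg_at_zero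

def radialSet (f : EuclideanSpace ℝ (Fin n) → EReal) (z : ℝ) (x : EuclideanSpace ℝ (Fin n)) :
    Set ℝ :=
  {γ : ℝ | 0 < γ ∧ perspective f x γ ≤ (z : EReal)}

theorem radial_eq_sInf_radialSet : radial f z x = sInf (radialSet f z x) := rfl

theorem bddBelow_radialSet : BddBelow (radialSet f z x) := ⟨0, fun _ hγ ↦ hγ.1.le⟩

theorem radial_le_of_mem {γ : ℝ} (hγ : γ ∈ radialSet f z x) : radial f z x ≤ γ :=
  csInf_le bddBelow_radialSet hγ

theorem mem_radialSet_iff {γ : ℝ} :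
    γ ∈ radialSet f z x ↔ 0 < γ ∧ f (γ⁻¹ • x) ≤ ↑(z / γ) := by
  refine and_congr_right fun hγ ↦ ?_
  rw [perspective, mul_comm, EReal.coe_div, EReal.le_div_iff_mul_le (by exact_mod_cast hγ)
    (EReal.coe_ne_top γ)]

theorem self_mem_radialSet_smul_iff {γ : ℝ} (hγ : 0 < γ) (y : EuclideanSpace ℝ (Fin n)) :
    γ ∈ radialSet f z (γ • y) ↔ f y ≤ ↑(z / γ) := by
  rw [mem_radialSet_iff, inv_smul_smul₀ hγ.ne', and_iff_right hγ]

theorem radialSet_div_inv_smul {c : ℝ} (hc : 0 < c) :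
    radialSet f (z / c) (c⁻¹ • x) = c⁻¹ • radialSet f z x := by
  ext γ
  rw [Set.mem_smul_set_iff_inv_smul_mem₀ (inv_ne_zero hc.ne'), inv_inv, smul_eq_mul,
    mem_radialSet_iff, mem_radialSet_iff, smul_smul, mul_inv, div_div, mul_comm γ⁻¹,
    mul_pos_iff_of_pos_left hc]

theorem radial_div_inv_smul {c : ℝ} (hc : 0 < c) :
    radial f (z / c) (c⁻¹ • x) = radial f z x / c := by
  rw [radial_eq_sInf_radialSet, radialSet_div_inv_smul hc,
    Real.sInf_smul_of_nonneg (inv_nonneg.2 hc.le), smul_eq_mul, div_eq_inv_mul,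
    radial_eq_sInf_radialSet]

theorem add_div_mem_radialSet (hf : Convex ℝ {p : EuclideanSpace ℝ (Fin n) × ℝ | f p.1 ≤ p.2})
    {r : ℝ} (hr : 0 < r) (hball : ∀ w : EuclideanSpace ℝ (Fin n), ‖w‖ ≤ r → f w ≤ 0)
    {β : ℝ} (hβ : β ∈ radialSet f z x) (u : EuclideanSpace ℝ (Fin n)) :
    β + ‖u‖ / r ∈ radialSet f z (x + u) := by
  rcases eq_or_ne u 0 with rfl | hu
  · simpa using hβ
  obtain ⟨hβpos, hfx⟩ := mem_radialSet_iff.1 hβ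
  set s := ‖u‖ / r
  have hs : 0 < s := div_pos (norm_pos_iff.2 hu) hr
  have hfu : f (s⁻¹ • u) ≤ ↑(0 : ℝ) := by
    refine hball _ (le_of_eq ?_)
    rw [norm_smul, norm_inv, Real.norm_of_nonneg hs.le, inv_div,
      div_mul_cancel₀ _ (norm_ne_zero_iff.2 hu)]
  have hcombo := apply_smul_add_smul_le_of_convex_epigraph hf
    (a := β / (β + s)) (b := s / (β + s)) (by positivity) (by positivity) (by field_simp) hfx hfu
  refine mem_radialSet_iff.2 ⟨by positivity, ?_⟩
  convert hcombo using 2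
  · rw [smul_smul, smul_smul, smul_add]
    congr 2 <;> field_simp
  · field_simp
    ring

theorem radialSet_nonempty (hf : GoodFun f) (hz : z < 0) (x : EuclideanSpace ℝ (Fin n)) :
    (radialSet f z x).Nonempty := by
  obtain ⟨r, hr, hball⟩ := hf.exists_nonpos_of_norm_le
  obtain ⟨w, hw, hwneg⟩ := hf.exists_real_apply_zero
  have hmem : z / w ∈ radialSet f z 0 := by
    rw [← smul_zero (z / w), self_mem_radialSet_smul_iff (div_pos_of_neg_of_neg hz hwneg),
      hw, div_div_cancel₀ hz.ne]
  exact ⟨_, zero_add x ▸ add_div_mem_radialSet hf.convexEpi hr hball hmem x⟩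

theorem radial_add_le (hf : Convex ℝ {p : EuclideanSpace ℝ (Fin n) × ℝ | f p.1 ≤ p.2})
    {r : ℝ} (hr : 0 < r) (hball : ∀ w : EuclideanSpace ℝ (Fin n), ‖w‖ ≤ r → f w ≤ 0)
    (hne : (radialSet f z x).Nonempty) (u : EuclideanSpace ℝ (Fin n)) :
    radial f z (x + u) ≤ radial f z x + ‖u‖ / r := by
  rw [← sub_le_iff_le_add, radial_eq_sInf_radialSet (x := x)]
  exact le_csInf hne fun β hβ ↦
    sub_le_iff_le_add.2 (radial_le_of_mem (add_div_mem_radialSet hf hr hball hβ u))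

theorem div_le_of_mem_radialSet {m : ℝ} (hm : ∀ y, (m : EReal) ≤ f y) (hm₀ : m < 0)
    {γ : ℝ} (hγ : γ ∈ radialSet f z x) : z / m ≤ γ := by
  obtain ⟨hγpos, hfx⟩ := mem_radialSet_iff.1 hγ
  have : m ≤ z / γ := by exact_mod_cast (hm _).trans hfx
  rw [div_le_iff_of_neg hm₀]
  rw [le_div_iff₀ hγpos] at this
  linarith

theorem radial_pos (hf : GoodFun f) {m : ℝ} (hm : ∀ y, (m : EReal) ≤ f y) (hz : z < 0)
    (x : EuclideanSpace ℝ (Fin n)) : 0 < radial f z x := by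
  have hm₀ := hf.neg_of_forall_le hm
  exact (div_pos_of_neg_of_neg hz hm₀).trans_le <|
    le_csInf (radialSet_nonempty hf hz x) fun γ ↦ div_le_of_mem_radialSet hm hm₀

theorem radial_zero_of_apply_zero (hf0 : f 0 = z) (hz : z < 0) : radial f z 0 = 1 := by
  have : radialSet f z 0 = Set.Ici 1 := by
    ext γ
    rw [mem_radialSet_iff, smul_zero, hf0, EReal.coe_le_coe_iff, Set.mem_Ici]
    constructor
    · rintro ⟨hγ, hle⟩
      rw [le_div_iff₀ hγ] at hle
      nlinarith
    · intro hγ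
      refine ⟨by linarith, ?_⟩
      rw [le_div_iff₀ (by linarith)]
      nlinarith
  rw [radial_eq_sInf_radialSet, this, csInf_Ici]

theorem radial_mem_radialSet (hf : LowerSemicontinuous f) (hne : (radialSet f z x).Nonempty)
    (hpos : 0 < radial f z x) : radial f z x ∈ radialSet f z x := by
  set γ₀ := radial f z x
  let g : ℝ → EuclideanSpace ℝ (Fin n) × EReal := fun γ ↦ (γ⁻¹ • x, ((z / γ : ℝ) : EReal))
  have hg : ContinuousAt g γ₀ := by
    refine ((continuousAt_inv₀ hpos.ne').smul continuousAt_const).prodMk ?_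
    exact continuous_coe_real_ereal.continuousAt.comp
      (continuousAt_const.div continuousAt_id hpos.ne')
  have hsub : g '' radialSet f z x ⊆ {p | f p.1 ≤ p.2} := by
    rintro _ ⟨γ, hγ, rfl⟩
    exact (mem_radialSet_iff.1 hγ).2
  have := closure_minimal hsub hf.isClosed_epigraph
    (mem_closure_image hg (csInf_mem_closure hne bddBelow_radialSet))
  exact mem_radialSet_iff.2 ⟨hpos, this⟩

end Radial

section Subgradient

variable {n : ℕ}

theorem IsSubgradient.norm_le_of_le_add {g : EuclideanSpace ℝ (Fin n) → ℝ}
    {x ζ : EuclideanSpace ℝ (Fin n)} {L : ℝ} (hζ : IsSubgradient g x ζ) (hL : 0 ≤ L)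
    (hg : ∀ u, g (x + u) ≤ g x + L * ‖u‖) : ‖ζ‖ ≤ L := by
  rcases eq_or_ne ζ 0 with rfl | hζ0
  · simpa using hL
  have h := (hζ (x + ζ)).trans (hg ζ)
  rw [add_sub_cancel_left, real_inner_self_eq_norm_sq, add_le_add_iff_left, sq] at h
  exact le_of_mul_le_mul_right h (norm_pos_iff.2 hζ0)

theorem IsSubgradient.mul_norm_le_one_of_radial {f : EuclideanSpace ℝ (Fin n) → EReal}
    (hf : GoodFun f) {R : ℝ} (hR : IsLUB {r : ℝ | ∀ x, ‖x‖ ≤ r → f x ≤ 0} R) {z : ℝ}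
    (hz : z < 0) {x ζ : EuclideanSpace ℝ (Fin n)} (hζ : IsSubgradient (radial f z) x ζ)
    (hζ0 : ζ ≠ 0) : R * ‖ζ‖ ≤ 1 := by
  rw [← le_div_iff₀ (norm_pos_iff.2 hζ0)]
  refine hR.2 fun r hr ↦ ?_
  rcases le_or_gt r 0 with hr0 | hr0
  · exact hr0.trans (by positivity)
  have := hζ.norm_le_of_le_add (inv_nonneg.2 hr0.le) fun u ↦ by
    simpa [inv_mul_eq_div] using radial_add_le hf.convexEpi hr0 hr (radialSet_nonempty hf hz x) u
  rwa [le_div_iff₀ (norm_pos_iff.2 hζ0), ← le_div_iff₀' hr0, one_div]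

end Subgradient

namespace RSM

variable {n : ℕ} {f : EuclideanSpace ℝ (Fin n) → EReal} {α : ℕ → ℝ}
  {x xt : ℕ → EuclideanSpace ℝ (Fin n)} {z : ℕ → ℝ} {ζ : ℕ → EuclideanSpace ℝ (Fin n)}
  {m fstar : ℝ} {xstar : EuclideanSpace ℝ (Fin n)}

theorem neg_and_radial_eq_one (hrsm : RSM f α x xt z ζ) (hf : GoodFun f)
    (hm : ∀ y, (m : EReal) ≤ f y) (i : ℕ) : z i < 0 ∧ radial f (z i) (x i) = 1 := by
  induction i with
  | zero =>
    have hz0 : z 0 < 0 := by exact_mod_cast hrsm.init_z ▸ hf.neg_at_zero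
    exact ⟨hz0, hrsm.init_x ▸ radial_zero_of_apply_zero hrsm.init_z hz0⟩
  | succ i ih =>
    have hγ := radial_pos hf hm ih.1 (xt (i + 1))
    rw [hrsm.update_x i hγ, hrsm.update_z i hγ, radial_div_inv_smul hγ, div_self hγ.ne']
    exact ⟨div_neg_of_neg_of_pos ih.1 hγ, rfl⟩

theorem exists_apply_eq_le (hrsm : RSM f α x xt z ζ) (hf : GoodFun f)
    (hm : ∀ y, (m : EReal) ≤ f y) (i : ℕ) : ∃ v : ℝ, f (x i) = v ∧ m ≤ v ∧ v ≤ z i := by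
  obtain ⟨hz, hrad⟩ := hrsm.neg_and_radial_eq_one hf hm i
  have hmem := radial_mem_radialSet hf.lsc (radialSet_nonempty hf hz (x i)) (hrad ▸ one_pos)
  rw [hrad, mem_radialSet_iff, inv_one, one_smul, div_one] at hmem
  have hne := EReal.coe_toReal (ne_top_of_le_ne_top (EReal.coe_ne_top _) hmem.2) (hf.proper (x i))
  refine ⟨(f (x i)).toReal, hne.symm, ?_, ?_⟩
  · exact_mod_cast hne ▸ hm (x i)
  · exact_mod_cast hne ▸ hmem.2

theorem norm_sq_succ_le (hrsm : RSM f α x xt z ζ) (hf : GoodFun f)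
    (hm : ∀ y, (fstar : EReal) ≤ f y) (hxstar : f xstar = fstar) {i : ℕ} (hζ : ζ i ≠ 0)
    (hα : α i = (z i - fstar) / (0 - fstar) * (1 / ‖ζ i‖ ^ 2)) :
    ‖(z (i + 1))⁻¹ • x (i + 1) - fstar⁻¹ • xstar‖ ^ 2 ≤
      ‖(z i)⁻¹ • x i - fstar⁻¹ • xstar‖ ^ 2 -
        ((z i - fstar) / (0 - fstar)) ^ 2 / (‖ζ i‖ ^ 2 * z i ^ 2) := by
  obtain ⟨hz, hrad⟩ := hrsm.neg_and_radial_eq_one hf hm i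
  obtain ⟨v, -, hmv, hvz⟩ := hrsm.exists_apply_eq_le hf hm i
  have hfstar := hf.neg_of_forall_le hm
  have hfne := hfstar.ne
  have hzne := hz.ne
  set Δ := (z i - fstar) / (0 - fstar)
  have hΔ0 : 0 ≤ Δ := div_nonneg (by linarith) (by linarith)
  have hc : 0 < z i / fstar := div_pos_of_neg_of_neg hz hfstar
  set y := (z i / fstar) • xstar
  have hy : radial f (z i) y ≤ z i / fstar := radial_le_of_mem <|
    (self_mem_radialSet_smul_iff hc xstar).2 (by rw [hxstar, div_div_cancel₀ hzne])
  have hinner : Δ ≤ inner ℝ (ζ i) (x i - y) := by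
    have hsub := hrsm.subgrad i y
    rw [hrad, ← neg_sub, inner_neg_right] at hsub
    have : Δ = 1 - z i / fstar := by simp only [Δ]; field_simp; ring
    linarith
  have hγ := radial_pos hf hm hz (xt (i + 1))
  have hscale : ∀ w, (z i)⁻¹ • w - fstar⁻¹ • xstar = (z i)⁻¹ • (w - y) := fun w ↦ by
    rw [smul_sub, smul_smul]
    congr 2
    field_simp
  have hnext : (z (i + 1))⁻¹ • x (i + 1) = (z i)⁻¹ • xt (i + 1) := by
    rw [hrsm.update_x i hγ, hrsm.update_z i hγ, smul_smul]
    congr 1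
    field_simp
  rw [hnext, hscale, hscale, norm_smul, norm_smul, mul_pow, mul_pow, hrsm.tilde i, hα, mul_one_div]
  have := mul_le_mul_of_nonneg_left (norm_sub_smul_sub_sq_le hζ hΔ0 hinner)
    (sq_nonneg ‖(z i)⁻¹‖)
  rw [norm_inv, Real.norm_eq_abs, inv_pow, sq_abs] at this ⊢
  exact this.trans_eq (by ring)

theorem add_one_mul_sq_le_norm_sq (hrsm : RSM f α x xt z ζ) (hf : GoodFun f) {R : ℝ}
    (hR : IsLUB {r : ℝ | ∀ x, ‖x‖ ≤ r → f x ≤ 0} R) (hm : ∀ y, (fstar : EReal) ≤ f y)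
    (hxstar : f xstar = fstar) (hζ : ∀ i, ζ i ≠ 0)
    (hα : ∀ i, α i = (z i - fstar) / (0 - fstar) * (1 / ‖ζ i‖ ^ 2)) {ε : ℝ} (hε : 0 < ε)
    {N : ℕ} (hgap : ∀ i ≤ N, ε < (z i - fstar) / (0 - fstar)) :
    (N + 1) * (ε * R) ^ 2 ≤ ‖xstar‖ ^ 2 := by
  have hfstar := hf.neg_of_forall_le hm
  have hR0 := (hf.pos_of_isLUB hR).le
  have hdecr : ∀ i ≤ N, ‖(z (i + 1))⁻¹ • x (i + 1) - fstar⁻¹ • xstar‖ ^ 2 ≤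
      ‖(z i)⁻¹ • x i - fstar⁻¹ • xstar‖ ^ 2 - (ε * R) ^ 2 / fstar ^ 2 := by
    intro i hi
    refine (hrsm.norm_sq_succ_le hf hm hxstar (hζ i) (hα i)).trans (sub_le_sub_left ?_ _)
    obtain ⟨hz, -⟩ := hrsm.neg_and_radial_eq_one hf hm i
    obtain ⟨v, -, hmv, hvz⟩ := hrsm.exists_apply_eq_le hf hm i
    have hRζ : R ≤ 1 / ‖ζ i‖ := by
      rw [le_div_iff₀ (norm_pos_iff.2 (hζ i))]
      exact (hrsm.subgrad i).mul_norm_le_one_of_radial hf hR hz (hζ i)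
    have hzf : z i ^ 2 ≤ fstar ^ 2 := by nlinarith
    have hz2 := sq_pos_of_neg hz
    have hεΔ := (hgap i hi).le
    have hΔ0 := hε.le.trans hεΔ
    calc (ε * R) ^ 2 / fstar ^ 2
        ≤ ((z i - fstar) / (0 - fstar) * (1 / ‖ζ i‖)) ^ 2 / z i ^ 2 := by
          gcongr
      _ = ((z i - fstar) / (0 - fstar)) ^ 2 / (‖ζ i‖ ^ 2 * z i ^ 2) := by ring
  have := add_one_mul_le_of_forall_le_sub
    (a := fun i ↦ ‖(z i)⁻¹ • x i - fstar⁻¹ • xstar‖ ^ 2) (sq_nonneg _) hdecr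
  have h0 : ‖(z 0)⁻¹ • x 0 - fstar⁻¹ • xstar‖ ^ 2 = ‖xstar‖ ^ 2 / fstar ^ 2 := by
    rw [hrsm.init_x, smul_zero, zero_sub, norm_neg, norm_smul, norm_inv, Real.norm_eq_abs,
      mul_pow, inv_pow, sq_abs, inv_mul_eq_div]
  rwa [h0, mul_div_assoc', div_le_div_iff_of_pos_right (sq_pos_of_neg hfstar)] at this

end RSM

/-- **Theorem 1.4.** Suppose `f* = inf f` is finite and attained on the nonempty set
`X* = {x | f x = f*}`. With step sizes `α i = ((z i - f*)/(0 - f*))·(1/‖ζ i‖²)`, for any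
`ε > 0` some iteration `i ≤ ⌈(dist(0,X*)²/R²)·(1/ε²)⌉` has `(f(x i) - f*)/(0 - f*) ≤ ε`. -/
theorem radial_subgradient_convergence_optimal_known {n : ℕ}
    (f : EuclideanSpace ℝ (Fin n) → EReal) (hf : GoodFun f)
    (R : ℝ) (hR : IsLUB {r : ℝ | ∀ x, ‖x‖ ≤ r → f x ≤ 0} R)
    (fstar : ℝ) (hfstar : (⨅ y, f y) = ((fstar : ℝ) : EReal))
    (hXstar : {y : EuclideanSpace ℝ (Fin n) | f y = ((fstar : ℝ) : EReal)}.Nonempty)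
    (α : ℕ → ℝ) (x xt : ℕ → EuclideanSpace ℝ (Fin n)) (z : ℕ → ℝ)
    (ζ : ℕ → EuclideanSpace ℝ (Fin n)) (hrsm : RSM f α x xt z ζ)
    (hζne : ∀ i, ζ i ≠ 0)
    (hα : ∀ i, α i = (z i - fstar) / (0 - fstar) * (1 / ‖ζ i‖ ^ 2))
    (ε : ℝ) (hε : 0 < ε) :
    ∃ i ≤ ⌈Metric.infDist (0 : EuclideanSpace ℝ (Fin n))
            {y | f y = ((fstar : ℝ) : EReal)} ^ 2 / R ^ 2 * (1 / ε ^ 2)⌉₊,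
      ∃ v : ℝ, f (x i) = ((v : ℝ) : EReal) ∧ (v - fstar) / (0 - fstar) ≤ ε := by
  have hm : ∀ y, (fstar : EReal) ≤ f y := fun y ↦ hfstar ▸ iInf_le f y
  have hfstar_neg := hf.neg_of_forall_le hm
  have hεR : 0 < (ε * R) ^ 2 := by have := hf.pos_of_isLUB hR; positivity
  set d := Metric.infDist (0 : EuclideanSpace ℝ (Fin n)) {y | f y = ((fstar : ℝ) : EReal)}
  set N := ⌈d ^ 2 / R ^ 2 * (1 / ε ^ 2)⌉₊
  by_contra! hgap
  have hΔgap : ∀ i ≤ N, ε < (z i - fstar) / (0 - fstar) := fun i hi ↦ by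
    obtain ⟨v, hv, -, hvz⟩ := hrsm.exists_apply_eq_le hf hm i
    exact (hgap i hi v hv).trans_le (by gcongr)
  have hlower : (N + 1) * (ε * R) ^ 2 ≤ d ^ 2 := le_infDist_sq hXstar fun y hy ↦ by
    rw [dist_zero_left]
    exact hrsm.add_one_mul_sq_le_norm_sq hf hR hm hy hζne hα hε hΔgap
  have hupper : d ^ 2 ≤ N * (ε * R) ^ 2 := by
    rw [← div_le_iff₀ hεR]
    exact (Nat.le_ceil _).trans_eq' (by ring)
  linarith
end

section
/- For any z < 0 and any x ∈ ℝⁿ, if γ_z(x) = 0 then lim_{t→∞} f(t·x) = −∞; that is, f is unbounded below along the ray { t·x | t > 0 }. -/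
open Filter

/-! If `γ f(x/γ) ≤ z`, convexity of `f` on the segment from `0` (where `f(0) ≤ 0`) to `x/γ` gives
`f(t x) ≤ t z` for every `0 < t ≤ 1/γ`. When `γ_z(x) = 0` such `γ` can be taken arbitrarily small,
so `f(t x) ≤ t z` for all `t > 0`, which tends to `-∞` since `z < 0`. The infimum is over a nonempty
set (so `γ_z(x) = 0` is not the junk value `sInf ∅ = 0`): `0 ∈ int dom f` gives `f(δ x) < ∞` for
some `δ > 0`, and convexity between `0` and `δ x` makes `γ f(x/γ) → -∞` as `γ → ∞`. -/

open Topology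

section ConvexEpigraph

variable {E : Type*} [AddCommGroup E] [Module ℝ E] {f : E → EReal}

theorem apply_smul_le_of_convex_epigraph
    (hf : Convex ℝ {p : E × ℝ | f p.1 ≤ (p.2 : EReal)}) {y : E} {v w : ℝ}
    (hy : f y ≤ v) (h0 : f 0 ≤ w) {c : ℝ} (hc₀ : 0 ≤ c) (hc₁ : c ≤ 1) :
    f (c • y) ≤ ((c * v + (1 - c) * w : ℝ) : EReal) := by
  have := hf (show ((y, v) : E × ℝ) ∈ _ from hy) (show ((0, w) : E × ℝ) ∈ _ from h0)
    hc₀ (sub_nonneg.2 hc₁) (add_sub_cancel c 1)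
  simpa [Prod.smul_def, smul_eq_mul] using this

end ConvexEpigraph

section Perspective

variable {n : ℕ} {f : EuclideanSpace ℝ (Fin n) → EReal} {x : EuclideanSpace ℝ (Fin n)}

theorem perspective_le_coe_iff {γ z : ℝ} (hγ : 0 < γ) :
    perspective f x γ ≤ z ↔ f (γ⁻¹ • x) ≤ ((z / γ : ℝ) : EReal) := by
  rw [perspective, EReal.coe_div, EReal.le_div_iff_mul_le (by exact_mod_cast hγ) (by simp),
    mul_comm]

theorem apply_smul_le_mul_of_perspective_le
    (hf : Convex ℝ {p : EuclideanSpace ℝ (Fin n) × ℝ | f p.1 ≤ (p.2 : EReal)}) (h0 : f 0 ≤ 0)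
    {γ z : ℝ} (hγ : 0 < γ) (hγz : perspective f x γ ≤ z) {t : ℝ} (ht : 0 < t)
    (hγt : γ ≤ t⁻¹) :
    f (t • x) ≤ ((t * z : ℝ) : EReal) := by
  have hsmul : t • x = (t * γ) • γ⁻¹ • x := by
    rw [smul_smul, mul_assoc, mul_inv_cancel₀ hγ.ne', mul_one]
  have := apply_smul_le_of_convex_epigraph hf ((perspective_le_coe_iff hγ).1 hγz)
    (w := 0) (by exact_mod_cast h0) (by positivity)
    ((mul_le_mul_of_nonneg_left hγt ht.le).trans_eq (mul_inv_cancel₀ ht.ne'))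
  rw [hsmul]
  convert this using 2
  field_simp
  ring

theorem exists_perspective_le
    (hf : Convex ℝ {p : EuclideanSpace ℝ (Fin n) × ℝ | f p.1 ≤ (p.2 : EReal)}) (h0 : f 0 < 0)
    {δ : ℝ} (hδ : 0 < δ) (hδx : f (δ • x) ≠ ⊤) (z : ℝ) :
    ∃ γ, 0 < γ ∧ perspective f x γ ≤ z := by
  obtain ⟨w, h0w, hw⟩ := EReal.exists_between_coe_real h0
  obtain ⟨M, hM, -⟩ := EReal.exists_between_coe_real (lt_top_iff_ne_top.2 hδx)
  replace hw : w < 0 := by exact_mod_cast hw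
  -- along `γ⁻¹ • x = (γ δ)⁻¹ • (δ • x)` convexity gives `perspective f x γ ≤ M / δ + (γ - δ⁻¹) w`
  have hbound : Tendsto (fun γ => M / δ + (γ - δ⁻¹) * w) atTop atBot :=
    tendsto_atBot_add_const_left _ _
      ((tendsto_atTop_add_const_right _ _ tendsto_id).atTop_mul_const_of_neg hw)
  obtain ⟨γ, hγz, hγδ⟩ :=
    ((hbound.eventually (eventually_le_atBot z)).and (eventually_ge_atTop δ⁻¹)).exists
  have hγ : 0 < γ := (inv_pos.2 hδ).trans_le hγδ
  refine ⟨γ, hγ, (perspective_le_coe_iff hγ).2 ?_⟩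
  have hc₁ : (γ * δ)⁻¹ ≤ 1 := inv_le_one_of_one_le₀ ((inv_le_iff_one_le_mul₀ hδ).1 hγδ)
  have hsmul : γ⁻¹ • x = (γ * δ)⁻¹ • δ • x := by
    rw [smul_smul, mul_inv, mul_assoc, inv_mul_cancel₀ hδ.ne', mul_one]
  rw [hsmul]
  refine (apply_smul_le_of_convex_epigraph hf hM.le h0w.le (by positivity) hc₁).trans ?_
  rw [EReal.coe_le_coe_iff, le_div_iff₀ hγ]
  convert hγz using 1
  field_simp

end Perspective

namespace GoodFun

variable {n : ℕ} {f : EuclideanSpace ℝ (Fin n) → EReal}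

theorem exists_pos_smul_ne_top (hf : GoodFun f) (x : EuclideanSpace ℝ (Fin n)) :
    ∃ δ : ℝ, 0 < δ ∧ f (δ • x) ≠ ⊤ := by
  have hcont : Tendsto (fun t : ℝ => t • x) (𝓝[>] 0) (𝓝 0) :=
    (Continuous.tendsto' (by fun_prop) 0 0 (zero_smul ℝ x)).mono_left nhdsWithin_le_nhds
  obtain ⟨δ, hδx, hδ⟩ :=
    ((hcont.eventually (mem_interior_iff_mem_nhds.1 hf.zero_mem)).and self_mem_nhdsWithin).exists
  exact ⟨δ, hδ, hδx⟩

theorem apply_smul_le_mul_of_radial_eq_zero (hf : GoodFun f) {z : ℝ}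
    {x : EuclideanSpace ℝ (Fin n)} (h : radial f z x = 0) {t : ℝ} (ht : 0 < t) :
    f (t • x) ≤ ((t * z : ℝ) : EReal) := by
  obtain ⟨δ, hδ, hδx⟩ := hf.exists_pos_smul_ne_top x
  have hne := exists_perspective_le hf.convexEpi hf.neg_at_zero hδ hδx z
  have hlt : radial f z x < t⁻¹ := h ▸ inv_pos.2 ht
  obtain ⟨γ, ⟨hγ, hγz⟩, hγt⟩ := (csInf_lt_iff ⟨0, fun γ hγ => hγ.1.le⟩ hne).1 hlt
  exact apply_smul_le_mul_of_perspective_le hf.convexEpi hf.neg_at_zero.le hγ hγz ht hγt.le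

end GoodFun

/-- **Proposition 2.3 (second part).** For any `z < 0` and any `x`, if `γ_z(x) = 0` then
`lim_{t→∞} f(t·x) = -∞`, i.e. `f` is unbounded below along the ray `{t·x | t > 0}`. -/
theorem radial_eq_zero_implies_unbounded_ray {n : ℕ}
    (f : EuclideanSpace ℝ (Fin n) → EReal) (hf : GoodFun f)
    (z : ℝ) (hz : z < 0) (x : EuclideanSpace ℝ (Fin n))
    (h : radial f z x = 0) :
    Tendsto (fun t : ℝ => f (t • x)) atTop (nhds (⊥ : EReal)) := by
  rw [EReal.tendsto_nhds_bot_iff_real]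
  intro c
  filter_upwards [(tendsto_id.atTop_mul_const_of_neg hz).eventually (eventually_lt_atBot c),
    eventually_gt_atTop 0] with t htc ht
  exact (hf.apply_smul_le_mul_of_radial_eq_zero h ht).trans_lt (by exact_mod_cast htc)
end
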